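/- Let G and G' be finite abelian groups of the same order with normalized character tables 𝒞 and 𝒞' respectively. Fix group isomorphisms φ : Ĝ → G and φ' : Ĝ' → G', and let Φ be the G × Ĝ permutation matrix with Φ_{a,χ} = 1 iff a = φ(χ), and Φ' the analogous G' × Ĝ' matrix for φ'. Then for every π ∈ bij(G,G'), setting π̂ := φ⁻¹ ∘ π ∘ φ' ∈ bij(Ĝ,Ĝ'), U^{π̂} := 𝒞†·P^{π̂}·𝒞', and Q^{π̂} := U^{π̂} ∘ conj(U^{π̂}) (entrywise product), one has Q^{π̂} = 𝒞†·Φ†·D^π·Φ'·𝒞'. -/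

import Mathlib

open scoped BigOperators Classical

/-- A winning correlation for the `(G,G')`-bijection game: nonnegative values,
the outputs sum to one for each pair of inputs, and the value is zero whenever
exactly one of `b = d` and `a = c` holds. -/
def IsWinningCorrelation {G G' : Type*} [Group G] [Group G'] [Fintype G] [Fintype G']
    (p : G → G → G' → G' → ℝ) : Prop :=
  (∀ (b d : G) (a c : G'), 0 ≤ p b d a c) ∧
  (∀ a c : G', (∑ b : G, ∑ d : G, p b d a c) = 1) ∧
  (∀ (b d : G) (a c : G'), ¬(b = d ↔ a = c) → p b d a c = 0)

/-- Membership in `B̂(G,G')`: a winning correlation whose sum over all pairs of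
inputs is `1` for every pair of outputs. -/
def MemBhat {G G' : Type*} [Group G] [Group G'] [Fintype G] [Fintype G']
    (p : G → G → G' → G' → ℝ) : Prop :=
  IsWinningCorrelation p ∧ ∀ b d : G, (∑ a : G', ∑ c : G', p b d a c) = 1

/-- A `(G,G')`-invariant correlation: an element of `B̂(G,G')` whose values depend only
on the quotients `b⁻¹ * d ∈ G` and `a⁻¹ * c ∈ G'`. -/
def IsInvariantCorrelation {G G' : Type*} [Group G] [Group G'] [Fintype G] [Fintype G']
    (p : G → G → G' → G' → ℝ) : Prop :=
  MemBhat p ∧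
  ∀ (b d b' d' : G) (a c a' c' : G'),
    b⁻¹ * d = b'⁻¹ * d' → a⁻¹ * c = a'⁻¹ * c' → p b d a c = p b' d' a' c'

/-- The correlation `p_G`. -/
noncomputable def pUnif (G : Type*) [Group G] [Fintype G] : G → G → G → G → ℝ :=
  fun b d a c => if b⁻¹ * d = a⁻¹ * c then ((Fintype.card G : ℝ))⁻¹ else 0

/-- Composition of correlations. -/
def corComp {G G' G'' : Type*} [Fintype G']
    (p₁ : G → G → G' → G' → ℝ) (p₂ : G' → G' → G'' → G'' → ℝ) :
    G → G → G'' → G'' → ℝ :=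
  fun b d a c => ∑ x : G', ∑ y : G', p₁ b d x y * p₂ x y a c

/-- The correlation matrix `D^p` of a `(G,G')`-invariant correlation `p`:
`D^p_{x,y} = |G| ⬝ p(b,d|a,c)` for any `b,d,a,c` with `b⁻¹d = x`, `a⁻¹c = y`
(here realized with `b = a = e`). -/
noncomputable def corrMatrix {G G' : Type*} [Group G] [Group G'] [Fintype G]
    (p : G → G → G' → G' → ℝ) : Matrix G G' ℝ :=
  Matrix.of fun x y => (Fintype.card G : ℝ) * p 1 x 1 y

/-- The deterministic correlation `p_π` associated with a bijection `π` from `G'` to `G`. -/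
noncomputable def detCor {G G' : Type*} (π : G' ≃ G) : G → G → G' → G' → ℝ :=
  fun b d a c => if b = π a ∧ d = π c then 1 else 0

/-- The permutation matrix `P^π` of a bijection `π` from `G'` to `G`. -/
noncomputable def permMatrix {G G' : Type*} (π : G' ≃ G) : Matrix G G' ℝ :=
  Matrix.of fun x y => if x = π y then 1 else 0

/-- The matrix `D^π`: the correlation matrix of the `(G,G')`-invariant correlation
`p_G ∘ p_π ∘ p_{G'}`. -/
noncomputable def Dpi {G G' : Type*} [Group G] [Group G'] [Fintype G] [Fintype G']
    (π : G' ≃ G) : Matrix G G' ℝ :=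
  corrMatrix (corComp (pUnif G) (corComp (detCor π) (pUnif G')))

/-- The normalized character table of a finite abelian group `G`: the `Ĝ × G` matrix
with `(χ, a)` entry `χ(a)/√|G|`, where `Ĝ = G →* ℂˣ` is the character group. -/
noncomputable def charTable (G : Type*) [CommGroup G] [Fintype G] :
    Matrix (G →* ℂˣ) G ℂ :=
  Matrix.of fun χ a => ((χ a : ℂˣ) : ℂ) / (Real.sqrt (Fintype.card G) : ℂ)

/-- The `Ĝ × Ĝ'` permutation matrix of a bijection `π̂` from `Ĝ'` to `Ĝ`. -/
noncomputable def charPermMatrix {G G' : Type*} [CommGroup G] [CommGroup G']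
    (π : (G' →* ℂˣ) ≃ (G →* ℂˣ)) : Matrix (G →* ℂˣ) (G' →* ℂˣ) ℂ :=
  Matrix.of fun χ χ' => if χ = π χ' then 1 else 0

/-- The `G × Ĝ` permutation matrix `Φ` encoding an isomorphism `φ : Ĝ → G`:
`Φ_{a,χ} = 1` iff `a = φ(χ)`. -/
noncomputable def isoMatrix {G : Type*} [CommGroup G]
    (φ : (G →* ℂˣ) ≃* G) : Matrix G (G →* ℂˣ) ℂ :=
  Matrix.of fun a χ => if a = φ χ then 1 else 0

/-!
Conjugating by `Φ` and `Φ'` turns `D^π` into `D^{π̂}`, whose `(χ, χ')` entry is the proportion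
of `ψ` with `π̂(ψ)⁻¹ π̂(ψχ') = χ`. On the other side, character values lie on the unit circle, so
complex conjugation inverts characters; expanding `U_{x,y} conj(U_{x,y})` as a double sum over
`ψ, χ'` and substituting `χ' ↦ ψχ'` gives `∑_ψ ∑_χ' conj((π̂(ψ)⁻¹ π̂(ψχ'))(x)) χ'(y)`, which is
the same count weighted by characters. The normalizations agree because `|G| = |G'|`.
-/

open Matrix Finset ComplexConjugate

section Characters

lemma MonoidHom.conj_apply_eq_inv_apply {G : Type*} [CommGroup G] [Finite G] (χ : G →* ℂˣ) (a : G) :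
    conj (χ a : ℂ) = (χ⁻¹ a : ℂ) := by
  have hpow : (χ a : ℂ) ^ orderOf a = 1 := by
    rw [← Units.val_pow_eq_pow_val, ← map_pow, pow_orderOf_eq_one, map_one, Units.val_one]
  rw [← Complex.inv_eq_conj (Complex.norm_eq_one_of_pow_eq_one hpow (orderOf_pos a).ne')]
  simp

variable {G G' : Type*} [CommGroup G] [CommGroup G'] [Finite G] [Finite G']
  [Fintype (G' →* ℂˣ)]

lemma charSum_mul_conj_charSum (ρ : (G' →* ℂˣ) → (G →* ℂˣ)) (x : G) (y : G') :
    (∑ χ, conj (ρ χ x : ℂ) * χ y) * conj (∑ χ, conj (ρ χ x : ℂ) * χ y) =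
      ∑ ψ, ∑ χ, conj (((ρ ψ)⁻¹ * ρ (ψ * χ)) x : ℂ) * χ y := by
  rw [map_sum, sum_mul_sum, sum_comm]
  refine sum_congr rfl fun ψ _ => ?_
  rw [← Equiv.sum_comp (Equiv.mulLeft ψ)]
  refine sum_congr rfl fun χ _ => ?_
  simp only [Equiv.coe_mulLeft, map_mul, MonoidHom.conj_apply_eq_inv_apply,
    MonoidHom.mul_apply, MonoidHom.inv_apply, Units.val_mul, Units.val_inv_eq_inv_val]
  have : (ψ y : ℂ) ≠ 0 := Units.ne_zero _
  field_simp

end Characters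

lemma corComp_detCor {G G' G'' : Type*} [Fintype G'] (π : G' ≃ G)
    (p : G' → G' → G'' → G'' → ℝ) :
    corComp (detCor π) p = fun b d a c => p (π.symm b) (π.symm d) a c := by
  ext b d a c
  simp only [corComp, detCor, ← Equiv.symm_apply_eq, ite_and, ite_mul, one_mul, zero_mul]
  rw [sum_comm]
  simp only [sum_ite_eq, mem_univ, if_true]

lemma corComp_pUnif_apply_one {G G' : Type*} [Group G] [Fintype G]
    (q : G → G → G' → G' → ℝ) (g : G) (a c : G') :
    corComp (pUnif G) q 1 g a c = (∑ x, q x (x * g) a c) / Fintype.card G := by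
  simp only [corComp, pUnif, inv_one, one_mul, ite_mul, zero_mul, eq_inv_mul_iff_mul_eq,
    eq_comm (a := _ * g), sum_ite_eq', mem_univ, if_true, sum_div]
  exact sum_congr rfl fun x _ => inv_mul_eq_div _ _

lemma Dpi_apply {G G' : Type*} [Group G] [Group G'] [Fintype G] [Fintype G'] (π : G' ≃ G)
    (g : G) (g' : G') :
    Dpi π g g' = #{u | (π u)⁻¹ * π (u * g') = g} / Fintype.card G' := by
  have hG : (Fintype.card G : ℝ) ≠ 0 := Nat.cast_ne_zero.2 Fintype.card_ne_zero
  have hcond : ∀ u, u⁻¹ * π.symm (π u * g) = g' ↔ (π u)⁻¹ * π (u * g') = g := by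
    intro u
    rw [inv_mul_eq_iff_eq_mul, Equiv.symm_apply_eq, inv_mul_eq_iff_eq_mul, eq_comm]
  rw [Dpi, corrMatrix, of_apply, corComp_pUnif_apply_one, corComp_detCor,
    mul_div_cancel₀ _ hG, ← π.sum_comp]
  simp only [pUnif, inv_one, one_mul, Equiv.symm_apply_apply, hcond]
  rw [← sum_boole, sum_div]
  simp only [ite_div, one_div, zero_div]

lemma Dpi_trans_mulEquiv {H H' G G' : Type*} [Group H] [Group H'] [Group G] [Group G']
    [Fintype H] [Fintype H'] [Fintype G] [Fintype G'] (φ : H ≃* G) (φ' : H' ≃* G')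
    (π : G' ≃ G) (h : H) (h' : H') :
    Dpi (φ'.toEquiv.trans (π.trans φ.toEquiv.symm)) h h' = Dpi π (φ h) (φ' h') := by
  rw [Dpi_apply, Dpi_apply, Fintype.card_congr φ'.toEquiv]
  congr 2
  refine card_equiv φ'.toEquiv fun u => ?_
  simp only [MulEquiv.toEquiv_eq_coe, Equiv.trans_apply, EquivLike.coe_coe,
    MulEquiv.coe_toEquiv_symm, map_mul, mem_filter, mem_univ, true_and]
  rw [← map_inv, ← map_mul, MulEquiv.symm_apply_eq]

lemma conjTranspose_isoMatrix_mul_mul_isoMatrix {G G' : Type*} [CommGroup G] [CommGroup G']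
    [Fintype G] [Fintype G'] (φ : (G →* ℂˣ) ≃* G) (φ' : (G' →* ℂˣ) ≃* G') (M : Matrix G G' ℂ) :
    (isoMatrix φ)ᴴ * M * isoMatrix φ' = M.submatrix φ φ' := by
  ext χ χ'
  simp only [isoMatrix, mul_apply, conjTranspose_apply, of_apply, RCLike.star_def,
    MonoidWithZeroHom.map_ite_one_zero, ite_mul, one_mul, zero_mul, sum_ite_eq', mem_univ,
    if_true, mul_ite, mul_one, mul_zero, submatrix_apply]

section CharacterTable

variable {G G' : Type*} [CommGroup G] [CommGroup G'] [Fintype G] [Fintype G']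
  [Fintype (G →* ℂˣ)] [Fintype (G' →* ℂˣ)]

lemma conjTranspose_charTable_mul_mul_charTable_apply (M : Matrix (G →* ℂˣ) (G' →* ℂˣ) ℂ)
    (x : G) (y : G') :
    ((charTable G)ᴴ * M * charTable G') x y =
      (∑ χ, ∑ χ', conj (χ x : ℂ) * M χ χ' * χ' y) /
        ((√(Fintype.card G) : ℝ) * (√(Fintype.card G') : ℝ)) := by
  simp only [charTable, mul_apply, conjTranspose_apply, of_apply, star_div₀, RCLike.star_def,
    Complex.conj_ofReal, sum_mul, sum_div]
  rw [sum_comm]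
  exact sum_congr rfl fun χ _ => sum_congr rfl fun χ' _ => by ring

lemma conjTranspose_charTable_mul_charPermMatrix_mul_charTable_apply
    (ρ : (G' →* ℂˣ) ≃ (G →* ℂˣ)) (x : G) (y : G') :
    ((charTable G)ᴴ * charPermMatrix ρ * charTable G') x y =
      (∑ χ, conj (ρ χ x : ℂ) * χ y) / ((√(Fintype.card G) : ℝ) * (√(Fintype.card G') : ℝ)) := by
  rw [conjTranspose_charTable_mul_mul_charTable_apply, sum_comm]
  simp only [charPermMatrix, of_apply, mul_ite, mul_one, mul_zero, ite_mul, zero_mul, sum_ite_eq',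
    mem_univ, if_true]

lemma conjTranspose_charTable_mul_Dpi_mul_charTable_apply
    (ρ : (G' →* ℂˣ) ≃ (G →* ℂˣ)) (x : G) (y : G') :
    ((charTable G)ᴴ * (Dpi ρ).map (fun r : ℝ => (r : ℂ)) * charTable G') x y =
      (∑ χ, ∑ ψ, conj (((ρ ψ)⁻¹ * ρ (ψ * χ)) x : ℂ) * χ y) / Fintype.card (G' →* ℂˣ) /
        ((√(Fintype.card G) : ℝ) * (√(Fintype.card G') : ℝ)) := by
  rw [conjTranspose_charTable_mul_mul_charTable_apply]
  congr 1
  rw [sum_comm, sum_div]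
  refine sum_congr rfl fun χ _ => ?_
  simp only [map_apply, Dpi_apply, Complex.ofReal_div, Complex.ofReal_natCast]
  simp only [natCast_card_filter, sum_div, mul_sum, sum_mul, ite_div, mul_ite, ite_mul, mul_zero,
    zero_mul, zero_div]
  rw [sum_comm]
  simp only [sum_ite_eq, mem_univ, if_true]
  exact sum_congr rfl fun ψ _ => by ring

end CharacterTable

/-- With `π̂ = φ⁻¹ ∘ π ∘ φ'`, `U^{π̂} = 𝒞† P^{π̂} 𝒞'` and
`Q^{π̂} = U^{π̂} ∘ conj(U^{π̂})` (entrywise product), one has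
`Q^{π̂} = 𝒞† Φ† D^π Φ' 𝒞'`. -/
theorem stmt16 {G G' : Type*} [CommGroup G] [CommGroup G'] [Fintype G] [Fintype G']
    [Fintype (G →* ℂˣ)] [Fintype (G' →* ℂˣ)]
    (hcard : Fintype.card G = Fintype.card G')
    (φ : (G →* ℂˣ) ≃* G) (φ' : (G' →* ℂˣ) ≃* G')
    (π : G' ≃ G) :
    (Matrix.of fun x y =>
        ((charTable G).conjTranspose *
            charPermMatrix (φ'.toEquiv.trans (π.trans φ.toEquiv.symm)) * charTable G') x y *
          (starRingEnd ℂ)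
            (((charTable G).conjTranspose *
                charPermMatrix (φ'.toEquiv.trans (π.trans φ.toEquiv.symm)) * charTable G') x y)) =
      (charTable G).conjTranspose * (isoMatrix φ).conjTranspose *
        ((Dpi π).map (fun r : ℝ => (r : ℂ))) * isoMatrix φ' * charTable G' := by
  set ρ := φ'.toEquiv.trans (π.trans φ.toEquiv.symm)
  have hΦ : (isoMatrix φ)ᴴ * (Dpi π).map (fun r : ℝ => (r : ℂ)) * isoMatrix φ' =
      (Dpi ρ).map (fun r : ℝ => (r : ℂ)) := by
    rw [conjTranspose_isoMatrix_mul_mul_isoMatrix]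
    ext χ χ'
    rw [submatrix_apply, map_apply, map_apply, Dpi_trans_mulEquiv]
  have hcardDual : (Fintype.card (G' →* ℂˣ) : ℂ) = Fintype.card G := by
    rw [Fintype.card_congr φ'.toEquiv, hcard]
  have hnorm :
      ((√(Fintype.card G) : ℝ) : ℂ) * ((√(Fintype.card G') : ℝ) : ℂ) = Fintype.card G := by
    rw [← hcard, ← Complex.ofReal_mul, Real.mul_self_sqrt (Nat.cast_nonneg _),
      Complex.ofReal_natCast]
  rw [Matrix.mul_assoc (charTable G)ᴴ (isoMatrix φ)ᴴ,
    Matrix.mul_assoc (charTable G)ᴴ ((isoMatrix φ)ᴴ * _), hΦ]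
  ext x y
  rw [of_apply, conjTranspose_charTable_mul_charPermMatrix_mul_charTable_apply,
    conjTranspose_charTable_mul_Dpi_mul_charTable_apply, map_div₀, div_mul_div_comm,
    charSum_mul_conj_charSum, sum_comm, hnorm, hcardDual, Complex.conj_natCast, div_div]
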